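/- Let λ > 0 and let x, y, z, t > 0 satisfy |z − x| ≤ 3t. Then P_t(x,y) ≤ 19^{λ+1} P_t(z,y). -/

import Mathlib

open MeasureTheory Set ENNReal

/-- The Bessel Poisson kernel given by Weinstein's formula. -/
noncomputable def PK (lam t x y : ℝ) : ℝ :=
  (2 * lam * t / Real.pi) *
    ∫ θ in Set.Ioo (0 : ℝ) Real.pi,
      Real.sin θ ^ (2 * lam - 1) *
        (x ^ 2 + y ^ 2 + t ^ 2 - 2 * x * y * Real.cos θ) ^ (-(lam + 1))

/-- The Poisson extension `P_σ f (x, t)` of a nonnegative function on `ℝ₊`. -/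
noncomputable def Pfwd (lam : ℝ) (σ : Measure ℝ) (f : ℝ → ℝ≥0∞) (x t : ℝ) : ℝ≥0∞ :=
  ∫⁻ y in Set.Ioi (0 : ℝ), ENNReal.ofReal (PK lam t x y) * f y ∂σ

/-- The adjoint operator `P*_μ g (y)` of a nonnegative function on `ℝ²₊₊`. -/
noncomputable def Padj (lam : ℝ) (μ : Measure (ℝ × ℝ)) (g : ℝ × ℝ → ℝ≥0∞) (y : ℝ) : ℝ≥0∞ :=
  ∫⁻ p in Set.Ioi (0 : ℝ) ×ˢ Set.Ioi (0 : ℝ), ENNReal.ofReal (PK lam p.2 p.1 y) * g p ∂μ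

/-- The triple `3I` of the interval `I = (a, b)`, intersected with `ℝ₊`. -/
def tri (a b : ℝ) : Set ℝ :=
  Set.Ioo ((a + b) / 2 - 3 * (b - a) / 2) ((a + b) / 2 + 3 * (b - a) / 2) ∩ Set.Ioi 0

/-- The Carleson box `Î = I × [0, |I|]` of the interval `I = (a, b)`. -/
def boxI (a b : ℝ) : Set (ℝ × ℝ) := Set.Ioo a b ×ˢ Set.Icc 0 (b - a)

/-- The enlarged box `3Î = 3I × [0, 3|I|]` of the interval `I = (a, b)`. -/
def boxI3 (a b : ℝ) : Set (ℝ × ℝ) := tri a b ×ˢ Set.Icc 0 (3 * (b - a))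

/-- The two-weight norm inequality for the Bessel Poisson operator with constant `N`,
for nonnegative `f ∈ L²(ℝ₊; σ)`. -/
def NormIneq (lam : ℝ) (σ : Measure ℝ) (μ : Measure (ℝ × ℝ)) (N : ℝ≥0∞) : Prop :=
  ∀ f : ℝ → ℝ≥0∞, Measurable f → (∫⁻ y in Set.Ioi (0 : ℝ), f y ^ 2 ∂σ) < ∞ →
    (∫⁻ p in Set.Ioi (0 : ℝ) ×ˢ Set.Ioi (0 : ℝ), Pfwd lam σ f p.1 p.2 ^ 2 ∂μ)
      ≤ N ^ 2 * ∫⁻ y in Set.Ioi (0 : ℝ), f y ^ 2 ∂σ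

/-- The dual two-weight norm inequality with constant `N`, for nonnegative
`g ∈ L²(ℝ²₊₊; μ)`. -/
def DualNormIneq (lam : ℝ) (σ : Measure ℝ) (μ : Measure (ℝ × ℝ)) (N : ℝ≥0∞) : Prop :=
  ∀ g : ℝ × ℝ → ℝ≥0∞, Measurable g →
    (∫⁻ p in Set.Ioi (0 : ℝ) ×ˢ Set.Ioi (0 : ℝ), g p ^ 2 ∂μ) < ∞ →
    (∫⁻ y in Set.Ioi (0 : ℝ), Padj lam μ g y ^ 2 ∂σ)
      ≤ N ^ 2 * ∫⁻ p in Set.Ioi (0 : ℝ) ×ˢ Set.Ioi (0 : ℝ), g p ^ 2 ∂μ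

/-- The forward testing condition with constant `F`:
`∫_{3Î} (P_σ 1_I)² dμ ≤ F² σ(I)` for every bounded interval `I ⊂ ℝ₊`. -/
def FwdTesting (lam : ℝ) (σ : Measure ℝ) (μ : Measure (ℝ × ℝ)) (F : ℝ≥0∞) : Prop :=
  ∀ a b : ℝ, 0 ≤ a → a < b →
    (∫⁻ p in boxI3 a b, Pfwd lam σ ((Set.Ioo a b).indicator 1) p.1 p.2 ^ 2 ∂μ)
      ≤ F ^ 2 * σ (Set.Ioo a b)

/-- The backward testing condition with constant `B`:
`∫_{3I} (P*_μ (t 1_Î))² dσ ≤ B² ∫_Î t² dμ` for every bounded interval `I ⊂ ℝ₊`. -/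
def BwdTesting (lam : ℝ) (σ : Measure ℝ) (μ : Measure (ℝ × ℝ)) (B : ℝ≥0∞) : Prop :=
  ∀ a b : ℝ, 0 ≤ a → a < b →
    (∫⁻ y in tri a b,
        Padj lam μ ((boxI a b).indicator fun p => ENNReal.ofReal p.2) y ^ 2 ∂σ)
      ≤ B ^ 2 * ∫⁻ p in boxI a b, ENNReal.ofReal p.2 ^ 2 ∂μ

/-! The denominator `Q_x(θ) = x² + y² + t² − 2xy cos θ` equals
`(x − y cos θ)² + y² sin² θ + t²`, so it is at least `t²`, and the parallelogram law gives
`Q_z + t² ≤ 2 Q_x + 2 (z − x)²`. When `|z − x| ≤ 3t` this is at most `2 Q_x + 18 t²`, and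
`t² ≤ Q_x` gives `Q_z ≤ 19 Q_x`. Raising to the power `−(λ + 1)` compares the integrands
pointwise, and both integrals converge because `sin^(2λ−1)` is integrable on `(0, π)` for
`λ > 0`, while `Q^(−(λ+1)) ≤ t^(−2(λ+1))`. -/

section

open Real intervalIntegral

lemma intervalIntegrable_sin_rpow_zero_half_pi {r : ℝ} (hr : -1 < r) (hr0 : r < 0) :
    IntervalIntegrable (fun θ => sin θ ^ r) volume 0 (π / 2) := by
  refine ((intervalIntegrable_rpow' hr).const_mul ((2 / π) ^ r)).mono_fun'
    (by fun_prop : Measurable fun θ => sin θ ^ r).aestronglyMeasurable ?_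
  filter_upwards [ae_restrict_mem measurableSet_uIoc] with θ hθ
  rw [uIoc_of_le (by positivity)] at hθ
  have hsin : 2 / π * θ ≤ sin θ := mul_le_sin hθ.1.le hθ.2
  have hpos : 0 < 2 / π * θ := mul_pos (by positivity) hθ.1
  rw [norm_of_nonneg (rpow_nonneg (hpos.le.trans hsin) r), ← mul_rpow (by positivity) hθ.1.le]
  exact rpow_le_rpow_of_nonpos hpos hsin hr0.le

lemma intervalIntegrable_sin_rpow {r : ℝ} (hr : -1 < r) :
    IntervalIntegrable (fun θ => sin θ ^ r) volume 0 π := by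
  rcases le_or_gt 0 r with hr0 | hr0
  · exact ((continuous_rpow_const hr0).comp continuous_sin).intervalIntegrable 0 π
  have hleft := intervalIntegrable_sin_rpow_zero_half_pi hr hr0
  -- `sin (π - θ) = sin θ` reflects the singularity at `0` onto the one at `π`
  have hright : IntervalIntegrable (fun θ => sin θ ^ r) volume (π / 2) π := by
    have h := (hleft.comp_sub_left π).symm
    rw [sub_zero, show π - π / 2 = π / 2 by ring] at h
    simpa only [sin_pi_sub] using h
  exact hleft.trans hright

noncomputable def weinsteinDenom (t x y θ : ℝ) : ℝ :=
  x ^ 2 + y ^ 2 + t ^ 2 - 2 * x * y * cos θ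

lemma sq_le_weinsteinDenom (t x y θ : ℝ) : t ^ 2 ≤ weinsteinDenom t x y θ := by
  unfold weinsteinDenom
  nlinarith [sq_nonneg (x - y * cos θ), sin_sq_add_cos_sq θ, sq_nonneg (y * sin θ)]

lemma weinsteinDenom_pos {t : ℝ} (ht : t ≠ 0) (x y θ : ℝ) : 0 < weinsteinDenom t x y θ :=
  (by positivity : 0 < t ^ 2).trans_le (sq_le_weinsteinDenom t x y θ)

lemma weinsteinDenom_add_sq_le (t x y z θ : ℝ) :
    weinsteinDenom t z y θ + t ^ 2 ≤ 2 * weinsteinDenom t x y θ + 2 * (z - x) ^ 2 := by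
  unfold weinsteinDenom
  nlinarith [sq_nonneg (2 * x - y * cos θ - z), sin_sq_add_cos_sq θ, sq_nonneg (y * sin θ)]

lemma weinsteinDenom_le_nineteen_mul {t x z : ℝ} (hzx : |z - x| ≤ 3 * t) (y θ : ℝ) :
    weinsteinDenom t z y θ ≤ 19 * weinsteinDenom t x y θ := by
  have hsq : (z - x) ^ 2 ≤ (3 * t) ^ 2 := by
    rw [← sq_abs]; exact pow_le_pow_left₀ (abs_nonneg _) hzx 2
  linarith [weinsteinDenom_add_sq_le t x y z θ, sq_le_weinsteinDenom t x y θ]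

lemma Real.rpow_neg_le_mul_rpow_neg {a b c p : ℝ} (hb : 0 < b) (hc : 0 < c) (hba : b ≤ c * a)
    (hp : 0 ≤ p) : a ^ (-p) ≤ c ^ p * b ^ (-p) := by
  have hbca : b / c ≤ a := by rwa [div_le_iff₀' hc]
  calc a ^ (-p) ≤ (b / c) ^ (-p) := rpow_le_rpow_of_nonpos (by positivity) hbca (by linarith)
    _ = c ^ p * b ^ (-p) := by
      rw [div_rpow hb.le hc.le, rpow_neg hc.le, div_inv_eq_mul, mul_comm]

noncomputable def weinsteinIntegrand (lam t x y θ : ℝ) : ℝ :=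
  sin θ ^ (2 * lam - 1) * weinsteinDenom t x y θ ^ (-(lam + 1))

lemma PK_eq_integral_weinsteinIntegrand (lam t x y : ℝ) :
    PK lam t x y = 2 * lam * t / π * ∫ θ in Ioo 0 π, weinsteinIntegrand lam t x y θ :=
  rfl

lemma integrableOn_weinsteinIntegrand {lam t : ℝ} (hlam : 0 < lam) (ht : t ≠ 0) (x y : ℝ) :
    IntegrableOn (weinsteinIntegrand lam t x y) (Ioo 0 π) := by
  have hsin : IntegrableOn (fun θ => (t ^ 2) ^ (-(lam + 1)) * sin θ ^ (2 * lam - 1)) (Ioo 0 π) :=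
    ((intervalIntegrable_iff_integrableOn_Ioo_of_le pi_pos.le).mp
      (intervalIntegrable_sin_rpow (by linarith))).const_mul _
  refine hsin.mono' (by unfold weinsteinIntegrand weinsteinDenom; fun_prop) ?_
  filter_upwards [ae_restrict_mem measurableSet_Ioo] with θ hθ
  have hs : 0 ≤ sin θ ^ (2 * lam - 1) :=
    rpow_nonneg (sin_nonneg_of_nonneg_of_le_pi hθ.1.le hθ.2.le) _
  rw [weinsteinIntegrand, norm_of_nonneg (mul_nonneg hs (rpow_nonneg
    (weinsteinDenom_pos ht x y θ).le _)), mul_comm]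
  exact mul_le_mul_of_nonneg_right (rpow_le_rpow_of_nonpos (by positivity)
    (sq_le_weinsteinDenom t x y θ) (by linarith)) hs

lemma weinsteinIntegrand_le_of_abs_sub_le {lam t x z θ : ℝ} (hlam : 0 ≤ lam + 1) (ht : t ≠ 0)
    (hzx : |z - x| ≤ 3 * t) (y : ℝ) (hθ : θ ∈ Icc 0 π) :
    weinsteinIntegrand lam t x y θ ≤ 19 ^ (lam + 1) * weinsteinIntegrand lam t z y θ := by
  rw [weinsteinIntegrand, weinsteinIntegrand, mul_left_comm]
  exact mul_le_mul_of_nonneg_left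
    (rpow_neg_le_mul_rpow_neg (weinsteinDenom_pos ht z y θ) (by norm_num)
      (weinsteinDenom_le_nineteen_mul hzx y θ) hlam)
    (rpow_nonneg (sin_nonneg_of_nonneg_of_le_pi hθ.1 hθ.2) _)

end

theorem bessel_poisson_kernel_comparison_high_general (lam : ℝ) (hlam : 0 < lam)
    (x y z t : ℝ) (ht : 0 < t)
    (hzx : |z - x| ≤ 3 * t) :
    PK lam t x y ≤ (19 : ℝ) ^ (lam + 1) * PK lam t z y := by
  have hpointwise : ∀ θ ∈ Ioo 0 Real.pi,
      weinsteinIntegrand lam t x y θ ≤ 19 ^ (lam + 1) * weinsteinIntegrand lam t z y θ :=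
    fun θ hθ => weinsteinIntegrand_le_of_abs_sub_le (by linarith) ht.ne' hzx y
      (Ioo_subset_Icc_self hθ)
  rw [PK_eq_integral_weinsteinIntegrand, PK_eq_integral_weinsteinIntegrand,
    mul_left_comm (19 ^ _), ← integral_const_mul (19 ^ (lam + 1))]
  refine mul_le_mul_of_nonneg_left ?_ (by positivity)
  exact setIntegral_mono_on (integrableOn_weinsteinIntegrand hlam ht.ne' x y)
    ((integrableOn_weinsteinIntegrand hlam ht.ne' z y).const_mul _) measurableSet_Ioo hpointwise

/-- Kernel comparison: if `|z − x| ≤ 3t`, then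
`P_t(x, y) ≤ 19^{λ+1} P_t(z, y)`. -/
theorem bessel_poisson_kernel_comparison_high (lam : ℝ) (hlam : 0 < lam)
    (x y z t : ℝ) (hx : 0 < x) (hy : 0 < y) (hz : 0 < z) (ht : 0 < t)
    (hzx : |z - x| ≤ 3 * t) :
    PK lam t x y ≤ (19 : ℝ) ^ (lam + 1) * PK lam t z y :=
  bessel_poisson_kernel_comparison_high_general lam hlam x y z t ht hzx
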